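/- Let n ≥ 3, p = ⌊(n−1)/2⌋, and let A ∈ B_{n,ℝ}. For 1 ≤ α ≤ p set ρ_α := (2α+1)·‖A^{2α} − (1/n)·tr(A^{2α})·I_n‖ (which is positive), and let S_α : T_A → T_A be the unique linear endomorphism such that ⟨S_α X, Y⟩ = −((2α+1)/ρ_α) · Σ_{r=0}^{2α−1} tr(X A^r Y A^{2α−1−r}) for all X, Y ∈ T_A (this is well defined because the right-hand side is a symmetric bilinear form on T_A; S_α is the shape operator of B_{n,ℝ} in the α-th unit normal direction). Then tr(S_α^q) = 0 for every odd positive integer q; equivalently, the multiset of eigenvalues of S_α is invariant under multiplication by −1. In particular B_{n,ℝ} is an austere submanifold of the unit sphere. -/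

import Mathlib

/-!
Since `A` is symmetric, its odd power traces determine the odd elementary symmetric functions of
its eigenvalues (Newton's identities, which only need the powers up to `n`), so these vanish and
the spectrum of `A` is symmetric under `λ ↦ -λ`. Hence `-A` has the characteristic polynomial of
`A`, and by the spectral theorem there is an orthogonal `u` with `u A uᵀ = -A`. Conjugation by `u`
preserves the tangent space `T_A` and flips the sign of the second fundamental form (each of its
terms has odd total degree in `A`), so it anticommutes with the shape operator `S`. Conjugating
`S ^ q` by it therefore gives `(-1) ^ q S ^ q`, and the odd power traces of `S` vanish.
-/

open Matrix

theorem Multiset.esymm_map_eq_zero_of_odd_sum_pow_eq_zero {σ R : Type*} [Fintype σ] [CommRing R]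
    [IsDomain R] [CharZero R] (μ : σ → R)
    (h : ∀ m, Odd m → m ≤ Fintype.card σ → ∑ i, μ i ^ m = 0) (k : ℕ) (hk : Odd k) :
    (Finset.univ.val.map μ).esymm k = 0 := by
  induction k using Nat.strong_induction_on with
  | _ k ih =>
  rcases lt_or_ge (Fintype.card σ) k with hlt | hle
  · rw [Multiset.esymm, Multiset.powersetCard_eq_empty _ (by simpa using hlt)]
    simp
  have newton := congrArg (MvPolynomial.aeval μ) (MvPolynomial.mul_esymm_eq_sum σ R k)
  simp only [map_mul, map_natCast, map_pow, map_neg, map_one, map_sum,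
    MvPolynomial.aeval_esymm_eq_multiset_esymm, MvPolynomial.psum, MvPolynomial.aeval_X] at newton
  rw [Finset.sum_eq_zero, mul_zero] at newton
  · exact (mul_eq_zero.mp newton).resolve_left (Nat.cast_ne_zero.mpr hk.pos.ne')
  -- in each term of Newton's identity one of the two indices is odd
  rintro ⟨a, b⟩ hab
  simp only [Finset.mem_filter, Finset.HasAntidiagonal.mem_antidiagonal] at hab
  obtain ⟨rfl, hab⟩ := hab
  rcases Nat.even_or_odd a with ha | ha
  · rw [h b ((Nat.odd_add'.mp hk).mpr ha) (by omega), mul_zero]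
  · rw [ih a hab ha, mul_zero, zero_mul]

open Polynomial in
theorem Multiset.map_neg_eq_self_of_esymm_odd {R : Type*} [CommRing R] [IsDomain R]
    {s : Multiset R} (h : ∀ k, Odd k → s.esymm k = 0) : s.map Neg.neg = s := by
  have hesymm (k : ℕ) : (s.map Neg.neg).esymm k = s.esymm k := by
    rcases Nat.even_or_odd k with hk | hk
    · rw [Multiset.esymm_neg, hk.neg_one_pow, one_mul]
    · rw [Multiset.esymm_neg, h k hk, mul_zero]
  have hprod : ((s.map Neg.neg).map (X - C ·)).prod = (s.map (X - C ·)).prod := by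
    ext k
    rcases le_or_gt k (Multiset.card s) with hk | hk
    · rw [Multiset.prod_X_sub_C_coeff _ (by simpa using hk), Multiset.prod_X_sub_C_coeff _ hk,
        Multiset.card_map, hesymm]
    · rw [coeff_eq_zero_of_natDegree_lt, coeff_eq_zero_of_natDegree_lt] <;>
        simpa only [natDegree_multiset_prod_X_sub_C_eq_card, Multiset.card_map]
  simpa only [roots_multiset_prod_X_sub_C] using congrArg roots hprod

theorem LinearMap.trace_pow_eq_zero_of_anticomm {R M : Type*} [CommRing R] [NoZeroDivisors R]
    [CharZero R] [AddCommGroup M] [Module R M] (f : Module.End R M) (e : M ≃ₗ[R] M)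
    (h : ∀ x, f (e x) = -e (f x)) {q : ℕ} (hq : Odd q) : trace R M (f ^ q) = 0 := by
  have hconj : e.conjAlgEquiv R f = -f := by
    ext x
    simpa [neg_eq_iff_eq_neg] using (h (e.symm x)).symm
  rw [← CharZero.eq_neg_self_iff]
  calc trace R M (f ^ q) = trace R M (e.conjAlgEquiv R (f ^ q)) := (trace_conj' _ _).symm
    _ = -trace R M (f ^ q) := by rw [map_pow, hconj, hq.neg_pow, map_neg]

namespace Matrix

open Unitary

variable {n : Type*} [Fintype n] [DecidableEq n]

section CommRing

variable {R : Type*} [CommRing R] [StarRing R]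

theorem trace_conjStarAlgAut (u : unitaryGroup n R) (X : Matrix n n R) :
    trace (conjStarAlgAut R _ u X) = trace X := by
  rw [conjStarAlgAut_apply, trace_mul_cycle, coe_star_mul_self, one_mul]

theorem charpoly_conjStarAlgAut (u : unitaryGroup n R) (X : Matrix n n R) :
    charpoly (conjStarAlgAut R _ u X) = charpoly X := by
  rw [conjStarAlgAut_apply, charpoly_mul_comm, ← mul_assoc, coe_star_mul_self, one_mul]

variable {u : unitaryGroup n R} {A : Matrix n n R}

theorem eq_conjStarAlgAut_neg (hu : conjStarAlgAut R _ u A = -A) :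
    A = conjStarAlgAut R _ u (-A) := by
  rw [map_neg, hu, neg_neg]

theorem trace_conjStarAlgAut_mul_pow (hu : conjStarAlgAut R _ u A = -A) (X : Matrix n n R)
    (k : ℕ) : trace (conjStarAlgAut R _ u X * A ^ k) = (-1) ^ k * trace (X * A ^ k) := by
  conv_lhs => rw [eq_conjStarAlgAut_neg hu]
  rw [← map_pow, ← map_mul, trace_conjStarAlgAut, ← neg_one_smul R A, smul_pow, mul_smul_comm,
    trace_smul, smul_eq_mul]

theorem trace_conjStarAlgAut_mul_pow_mul_conjStarAlgAut_mul_pow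
    (hu : conjStarAlgAut R _ u A = -A) (X Y : Matrix n n R) (r s : ℕ) :
    trace (conjStarAlgAut R _ u X * A ^ r * conjStarAlgAut R _ u Y * A ^ s) =
      (-1) ^ (r + s) * trace (X * A ^ r * Y * A ^ s) := by
  conv_lhs => rw [eq_conjStarAlgAut_neg hu]
  simp only [← map_pow, ← map_mul, trace_conjStarAlgAut, ← neg_one_smul R A, smul_pow,
    mul_smul_comm, smul_mul_assoc, trace_smul, smul_eq_mul, smul_smul, pow_add]
  ring

theorem conjStarAlgAut_mem_of_eq_neg [TrivialStar R] (hu : conjStarAlgAut R _ u A = -A)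
    {p : ℕ} {T : Submodule R (Matrix n n R)}
    (hT : ∀ X, X ∈ T ↔ (Xᵀ = X ∧ trace X = 0 ∧ trace (X * A) = 0 ∧
      ∀ α, 1 ≤ α → α ≤ p → trace (X * A ^ (2 * α)) = 0))
    {X : Matrix n n R} (hX : X ∈ T) : conjStarAlgAut R _ u X ∈ T := by
  obtain ⟨hsymm, htr, htrA, htrpow⟩ := (hT X).1 hX
  refine (hT _).2 ⟨?_, by rw [trace_conjStarAlgAut, htr], ?_, fun α h1 h2 ↦ ?_⟩
  · rw [← conjTranspose_eq_transpose_of_trivial, ← star_eq_conjTranspose, ← map_star,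
      star_eq_conjTranspose, conjTranspose_eq_transpose_of_trivial, hsymm]
  · simpa [htrA] using trace_conjStarAlgAut_mul_pow hu X 1
  · rw [trace_conjStarAlgAut_mul_pow hu, htrpow α h1 h2, mul_zero]

end CommRing

namespace IsHermitian

variable {𝕜 : Type*} [RCLike 𝕜] {A B : Matrix n n 𝕜}

theorem exists_conjStarAlgAut_eq_of_charpoly_eq (hA : A.IsHermitian) (hB : B.IsHermitian)
    (h : A.charpoly = B.charpoly) : ∃ u : unitaryGroup n 𝕜, conjStarAlgAut 𝕜 _ u A = B :=
  ⟨hB.eigenvectorUnitary * star hA.eigenvectorUnitary, by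
    rw [conjStarAlgAut_mul_apply, hA.conjStarAlgAut_star_eigenvectorUnitary,
      (hA.eigenvalues_eq_eigenvalues_iff hB).2 h, ← hB.spectral_theorem]⟩

theorem trace_pow_eq_sum_eigenvalues_pow (hA : A.IsHermitian) (m : ℕ) :
    trace (A ^ m) = ∑ i, (hA.eigenvalues i : 𝕜) ^ m := by
  conv_lhs => rw [hA.spectral_theorem]
  rw [← map_pow, trace_conjStarAlgAut, diagonal_pow, trace_diagonal]
  rfl

theorem charpoly_neg_eq_of_trace_pow_odd (hA : A.IsHermitian)
    (h : ∀ m, Odd m → m ≤ Fintype.card n → trace (A ^ m) = 0) : (-A).charpoly = A.charpoly := by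
  have hsymm : (Finset.univ.val.map (RCLike.ofReal ∘ hA.eigenvalues : n → 𝕜)).map Neg.neg =
      Finset.univ.val.map (RCLike.ofReal ∘ hA.eigenvalues) :=
    Multiset.map_neg_eq_self_of_esymm_odd <|
      Multiset.esymm_map_eq_zero_of_odd_sum_pow_eq_zero _ fun m hm hmn ↦ by
        rw [← h m hm hmn, hA.trace_pow_eq_sum_eigenvalues_pow]; rfl
  conv_lhs => rw [hA.spectral_theorem]
  rw [← map_neg, charpoly_conjStarAlgAut, diagonal_neg, charpoly_diagonal, hA.charpoly_eq]
  have := congrArg (fun s ↦ (s.map (fun x ↦ Polynomial.X - Polynomial.C x)).prod) hsymm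
  simp only [Multiset.map_map] at this
  exact this

theorem exists_conjStarAlgAut_eq_neg (hA : A.IsHermitian)
    (h : ∀ m, Odd m → m ≤ Fintype.card n → trace (A ^ m) = 0) :
    ∃ u : unitaryGroup n 𝕜, conjStarAlgAut 𝕜 _ u A = -A :=
  hA.exists_conjStarAlgAut_eq_of_charpoly_eq hA.neg (hA.charpoly_neg_eq_of_trace_pow_odd h).symm

end IsHermitian

theorem exists_linearEquiv_anticomm_of_conjStarAlgAut_eq_neg {A : Matrix n n ℝ}
    {T : Submodule ℝ (Matrix n n ℝ)} (hsymm : ∀ X ∈ T, Xᵀ = X) {u : unitaryGroup n ℝ}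
    (hu : conjStarAlgAut ℝ _ u A = -A) (hTu : ∀ X ∈ T, conjStarAlgAut ℝ _ u X ∈ T)
    (hTu' : ∀ X ∈ T, conjStarAlgAut ℝ _ (star u) X ∈ T) {κ : ℝ} {m : ℕ} (hm : Even m)
    (S : Module.End ℝ T)
    (hS : ∀ X Y : T, trace ((S X : Matrix n n ℝ) * (Y : Matrix n n ℝ)) =
      κ * ∑ r ∈ Finset.range m,
        trace ((X : Matrix n n ℝ) * A ^ r * (Y : Matrix n n ℝ) * A ^ (m - 1 - r))) :
    ∃ j : T ≃ₗ[ℝ] T, ∀ X, S (j X) = -j (S X) := by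
  set c := conjStarAlgAut ℝ _ u
  have hmap : T.map (c.toAlgEquiv.toLinearEquiv : Matrix n n ℝ →ₗ[ℝ] Matrix n n ℝ) = T :=
    le_antisymm (Submodule.map_le_iff_le_comap.2 hTu)
      fun X hX ↦ ⟨c.symm X, by rw [conjStarAlgAut_symm]; exact hTu' X hX, c.apply_symm_apply X⟩
  let j := c.toAlgEquiv.toLinearEquiv.ofSubmodules T T hmap
  have hj (X : T) : (j X : Matrix n n ℝ) = c X := rfl
  refine ⟨j, fun X ↦ ?_⟩
  have hform (Y : T) :
      trace ((S (j X) : Matrix n n ℝ) * (j Y : Matrix n n ℝ)) =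
        -trace ((j (S X) : Matrix n n ℝ) * (j Y : Matrix n n ℝ)) := by
    obtain ⟨k, rfl⟩ := hm
    calc trace ((S (j X) : Matrix n n ℝ) * (j Y : Matrix n n ℝ))
        = κ * ∑ r ∈ Finset.range (k + k), -trace ((X : Matrix n n ℝ) * A ^ r *
            (Y : Matrix n n ℝ) * A ^ (k + k - 1 - r)) := by
          rw [hS, hj, hj]
          refine congrArg _ (Finset.sum_congr rfl fun r hr ↦ ?_)
          have hodd : Odd (r + (k + k - 1 - r)) := ⟨k - 1, by simp at hr; omega⟩
          rw [trace_conjStarAlgAut_mul_pow_mul_conjStarAlgAut_mul_pow hu, hodd.neg_one_pow,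
            neg_one_mul]
      _ = -trace ((j (S X) : Matrix n n ℝ) * (j Y : Matrix n n ℝ)) := by
          rw [Finset.sum_neg_distrib, mul_neg, ← hS, hj, hj, ← map_mul, trace_conjStarAlgAut]
  set W := S (j X) + j (S X)
  have hW : trace ((W : Matrix n n ℝ)ᴴ * (W : Matrix n n ℝ)) = 0 := by
    have := hform (j.symm W)
    rw [j.apply_symm_apply, Submodule.coe_add] at this
    rw [conjTranspose_eq_transpose_of_trivial, hsymm W W.2, Submodule.coe_add, add_mul,
      trace_add, this, neg_add_cancel]
  exact eq_neg_of_add_eq_zero_left (Subtype.ext (trace_conjTranspose_mul_self_eq_zero_iff.1 hW))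

end Matrix

theorem shape_operator_austere_general (n : ℕ) (p : ℕ) (hp : p = (n - 1) / 2)
    (A : Matrix (Fin n) (Fin n) ℝ) (hAsym : Aᵀ = A)
    (hodd : ∀ k ≤ p, Matrix.trace (A ^ (2 * k + 1)) = 0)
    (T : Submodule ℝ (Matrix (Fin n) (Fin n) ℝ))
    (hT : ∀ X, X ∈ T ↔ (Xᵀ = X ∧ Matrix.trace X = 0 ∧ Matrix.trace (X * A) = 0 ∧
      ∀ α, 1 ≤ α → α ≤ p → Matrix.trace (X * A ^ (2 * α)) = 0))
    (α : ℕ)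
    (ρ : ℝ)
    (S : Module.End ℝ T)
    (hS : ∀ X Y : T, Matrix.trace ((S X : Matrix (Fin n) (Fin n) ℝ) * (Y : Matrix (Fin n) (Fin n) ℝ)) =
      -((2 * α + 1) / ρ) * ∑ r ∈ Finset.range (2 * α),
        Matrix.trace ((X : Matrix (Fin n) (Fin n) ℝ) * A ^ r *
          (Y : Matrix (Fin n) (Fin n) ℝ) * A ^ (2 * α - 1 - r))) :
    ∀ q : ℕ, Odd q → LinearMap.trace ℝ T (S ^ q) = 0 := by
  have hA : A.IsHermitian := by rwa [IsHermitian, conjTranspose_eq_transpose_of_trivial]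
  obtain ⟨u, hu⟩ := hA.exists_conjStarAlgAut_eq_neg <| by
    rintro m ⟨k, rfl⟩ hm
    exact hodd k (by rw [Fintype.card_fin] at hm; omega)
  have hu' : Unitary.conjStarAlgAut ℝ _ (star u) A = -A := by
    rw [← Unitary.conjStarAlgAut_symm, StarAlgEquiv.symm_apply_eq, map_neg, hu, neg_neg]
  obtain ⟨j, hj⟩ := exists_linearEquiv_anticomm_of_conjStarAlgAut_eq_neg
    (fun X hX ↦ ((hT X).1 hX).1) hu (fun _ ↦ conjStarAlgAut_mem_of_eq_neg hu hT)
    (fun _ ↦ conjStarAlgAut_mem_of_eq_neg hu' hT) (even_two_mul α) S hS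
  exact fun q hq ↦ LinearMap.trace_pow_eq_zero_of_anticomm S j hj hq

/-- the shape operators of `B_{n,ℝ}` are austere: all odd-power
traces of the shape operator `S_α` vanish. -/
theorem shape_operator_austere (n : ℕ) (hn : 3 ≤ n) (p : ℕ) (hp : p = (n - 1) / 2)
    (A : Matrix (Fin n) (Fin n) ℝ) (hAsym : Aᵀ = A)
    (hA0 : Matrix.trace A = 0)
    (hA2 : Matrix.trace (A ^ 2) = 1)
    (hodd : ∀ k ≤ p, Matrix.trace (A ^ (2 * k + 1)) = 0)
    (hli : LinearIndependent ℝ (fun α : Fin (p + 1) => A ^ (2 * (α : ℕ))))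
    (T : Submodule ℝ (Matrix (Fin n) (Fin n) ℝ))
    (hT : ∀ X, X ∈ T ↔ (Xᵀ = X ∧ Matrix.trace X = 0 ∧ Matrix.trace (X * A) = 0 ∧
      ∀ α, 1 ≤ α → α ≤ p → Matrix.trace (X * A ^ (2 * α)) = 0))
    (α : ℕ) (hα1 : 1 ≤ α) (hα2 : α ≤ p)
    (ρ : ℝ)
    (hρ : ρ = (2 * α + 1) * Real.sqrt (Matrix.trace
      ((A ^ (2 * α) - (Matrix.trace (A ^ (2 * α)) / (n : ℝ)) • (1 : Matrix (Fin n) (Fin n) ℝ)) *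
       (A ^ (2 * α) - (Matrix.trace (A ^ (2 * α)) / (n : ℝ)) • (1 : Matrix (Fin n) (Fin n) ℝ)))))
    (S : Module.End ℝ T)
    (hS : ∀ X Y : T, Matrix.trace ((S X : Matrix (Fin n) (Fin n) ℝ) * (Y : Matrix (Fin n) (Fin n) ℝ)) =
      -((2 * α + 1) / ρ) * ∑ r ∈ Finset.range (2 * α),
        Matrix.trace ((X : Matrix (Fin n) (Fin n) ℝ) * A ^ r *
          (Y : Matrix (Fin n) (Fin n) ℝ) * A ^ (2 * α - 1 - r))) :
    ∀ q : ℕ, Odd q → LinearMap.trace ℝ T (S ^ q) = 0 :=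
  shape_operator_austere_general n p hp A hAsym hodd T hT α ρ S hS
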